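/- arXiv:math/0701749 — 4 statements merged into one kernel-verified Lean document; each statement's English description precedes it below -/
import Mathlib

section
/- Let (H, μ, η, τ) be a quantum heap over a field k and ε : H → k a unital algebra homomorphism. Define Δ := (id ⊗ ε ⊗ id) ∘ τ : H → H ⊗ H. Then Δ is coassociative: (id ⊗ Δ) ∘ Δ = (Δ ⊗ id) ∘ Δ. -/
open TensorProduct LinearMap

/-- Viewing `H ⊗ (H ⊗ H)` inside `H ⊗ (Hᵐᵒᵖ ⊗ H)`: the middle tensor factor is
given the opposite multiplication. -/
noncomputable def midOp (k H : Type*) [CommRing k] [Ring H] [Algebra k H] :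
    H ⊗[k] (H ⊗[k] H) →ₗ[k] H ⊗[k] (Hᵐᵒᵖ ⊗[k] H) :=
  lTensor H (rTensor H (MulOpposite.opLinearEquiv k).toLinearMap)

/-- A quantum heap: a unital associative `k`-algebra `H` with a ternary cooperation
`τ : H → H ⊗ H_op ⊗ H` which is a unital algebra homomorphism (recorded via `midOp`),
satisfies coassociativity `(id⊗id⊗τ)τ = (τ⊗id⊗id)τ`, and
`(id⊗μ)τ(h) = h ⊗ 1`, `(μ⊗id)τ(h) = 1 ⊗ h`. -/
structure QuantumHeap (k H : Type*) [CommRing k] [Ring H] [Algebra k H] where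
  τ : H →ₗ[k] H ⊗[k] (H ⊗[k] H)
  coassoc : lTensor H (lTensor H τ) ∘ₗ τ =
    lTensor H ((TensorProduct.assoc k H H (H ⊗[k] H)).toLinearMap) ∘ₗ
      (TensorProduct.assoc k H (H ⊗[k] H) (H ⊗[k] H)).toLinearMap ∘ₗ
      rTensor (H ⊗[k] H) τ ∘ₗ τ
  idMul : ∀ h : H, lTensor H (mul' k H) (τ h) = h ⊗ₜ[k] (1 : H)
  mulId : ∀ h : H, rTensor H (mul' k H) ((TensorProduct.assoc k H H H).symm (τ h)) =
    (1 : H) ⊗ₜ[k] h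
  map_mul : ∀ h g : H, midOp k H (τ (h * g)) = midOp k H (τ h) * midOp k H (τ g)
  map_one : midOp k H (τ 1) = 1

/-- The coproduct `Δ = (id ⊗ ε ⊗ id) ∘ τ` built from a quantum heap and a character. -/
noncomputable def qhDelta {k H : Type*} [CommRing k] [Ring H] [Algebra k H]
    (Q : QuantumHeap k H) (ε : H →ₐ[k] k) : H →ₗ[k] H ⊗[k] H :=
  lTensor H ((TensorProduct.lid k H).toLinearMap ∘ₗ rTensor H ε.toLinearMap) ∘ₗ Q.τ

-- auxiliary lemmas

lemma epsNat {k H : Type*} [CommRing k] [Ring H] [Algebra k H]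
    (ε : H →ₐ[k] k) {A B : Type*} [AddCommGroup A] [Module k A]
    [AddCommGroup B] [Module k B] (f : A →ₗ[k] B) :
    f ∘ₗ ((TensorProduct.lid k A).toLinearMap ∘ₗ rTensor A ε.toLinearMap) =
      ((TensorProduct.lid k B).toLinearMap ∘ₗ rTensor B ε.toLinearMap) ∘ₗ lTensor H f := by
  ext x a
  simp

lemma qhDelta_coassoc_aux {k H : Type*} [Field k] [Ring H] [Algebra k H]
    (τ : H →ₗ[k] H ⊗[k] (H ⊗[k] H)) (ε : H →ₐ[k] k)
    (coassocτ : lTensor H (lTensor H τ) ∘ₗ τ =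
      lTensor H ((TensorProduct.assoc k H H (H ⊗[k] H)).toLinearMap) ∘ₗ
        (TensorProduct.assoc k H (H ⊗[k] H) (H ⊗[k] H)).toLinearMap ∘ₗ
        rTensor (H ⊗[k] H) τ ∘ₗ τ) :
    lTensor H (lTensor H ((TensorProduct.lid k H).toLinearMap ∘ₗ rTensor H ε.toLinearMap) ∘ₗ τ) ∘ₗ
        (lTensor H ((TensorProduct.lid k H).toLinearMap ∘ₗ rTensor H ε.toLinearMap) ∘ₗ τ) =
      (TensorProduct.assoc k H H H).toLinearMap ∘ₗ
        rTensor H (lTensor H ((TensorProduct.lid k H).toLinearMap ∘ₗ rTensor H ε.toLinearMap) ∘ₗ τ) ∘ₗ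
        (lTensor H ((TensorProduct.lid k H).toLinearMap ∘ₗ rTensor H ε.toLinearMap) ∘ₗ τ) := by
  set E : H ⊗[k] H →ₗ[k] H :=
    (TensorProduct.lid k H).toLinearMap ∘ₗ rTensor H ε.toLinearMap with hE
  set EX : H ⊗[k] (H ⊗[k] (H ⊗[k] H)) →ₗ[k] H ⊗[k] (H ⊗[k] H) :=
    (TensorProduct.lid k (H ⊗[k] (H ⊗[k] H))).toLinearMap ∘ₗ
      rTensor (H ⊗[k] (H ⊗[k] H)) ε.toLinearMap with hEX
  set Φ : H ⊗[k] (H ⊗[k] (H ⊗[k] (H ⊗[k] H))) →ₗ[k] H ⊗[k] (H ⊗[k] H) :=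
    lTensor H (lTensor H E ∘ₗ EX) with hΦ
  have hL : lTensor H (lTensor H E ∘ₗ τ) ∘ₗ (lTensor H E ∘ₗ τ)
      = Φ ∘ₗ (lTensor H (lTensor H τ) ∘ₗ τ) := by
    rw [← comp_assoc, ← comp_assoc, ← lTensor_comp, hΦ, ← lTensor_comp]
    congr 2
    rw [comp_assoc, epsNat ε τ, ← comp_assoc, comp_assoc]
  have hS : Φ ∘ₗ (lTensor H ((TensorProduct.assoc k H H (H ⊗[k] H)).toLinearMap) ∘ₗ
        (TensorProduct.assoc k H (H ⊗[k] H) (H ⊗[k] H)).toLinearMap)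
      = (TensorProduct.assoc k H H H).toLinearMap ∘ₗ lTensor (H ⊗[k] H) E ∘ₗ
        rTensor (H ⊗[k] H) (lTensor H E) := by
    ext
    simp [hΦ, hE, hEX]
    rw [← TensorProduct.smul_tmul', map_smul, TensorProduct.assoc_tmul, smul_comm]
  have hR : (TensorProduct.assoc k H H H).toLinearMap ∘ₗ
        rTensor H (lTensor H E ∘ₗ τ) ∘ₗ (lTensor H E ∘ₗ τ)
      = Φ ∘ₗ (lTensor H ((TensorProduct.assoc k H H (H ⊗[k] H)).toLinearMap) ∘ₗ
          (TensorProduct.assoc k H (H ⊗[k] H) (H ⊗[k] H)).toLinearMap ∘ₗ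
          rTensor (H ⊗[k] H) τ ∘ₗ τ) := by
    have h1 : rTensor H (lTensor H E ∘ₗ τ) ∘ₗ lTensor H E
        = lTensor (H ⊗[k] H) E ∘ₗ rTensor (H ⊗[k] H) (lTensor H E) ∘ₗ
            rTensor (H ⊗[k] H) τ := by
      rw [← rTensor_comp, rTensor_comp_lTensor, ← lTensor_comp_rTensor]
    calc (TensorProduct.assoc k H H H).toLinearMap ∘ₗ
          rTensor H (lTensor H E ∘ₗ τ) ∘ₗ (lTensor H E ∘ₗ τ)
        = ((TensorProduct.assoc k H H H).toLinearMap ∘ₗ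
            (rTensor H (lTensor H E ∘ₗ τ) ∘ₗ lTensor H E)) ∘ₗ τ := by
          simp only [comp_assoc]
      _ = ((TensorProduct.assoc k H H H).toLinearMap ∘ₗ
            (lTensor (H ⊗[k] H) E ∘ₗ rTensor (H ⊗[k] H) (lTensor H E) ∘ₗ
              rTensor (H ⊗[k] H) τ)) ∘ₗ τ := by rw [h1]
      _ = ((Φ ∘ₗ (lTensor H ((TensorProduct.assoc k H H (H ⊗[k] H)).toLinearMap) ∘ₗ
            (TensorProduct.assoc k H (H ⊗[k] H) (H ⊗[k] H)).toLinearMap)) ∘ₗ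
              rTensor (H ⊗[k] H) τ) ∘ₗ τ := by
          rw [hS]; simp only [comp_assoc]
      _ = _ := by simp only [comp_assoc]
  rw [hL, hR, coassocτ]

/-- `Δ := (id ⊗ ε ⊗ id) ∘ τ` is coassociative. -/
theorem qhDelta_coassoc {k H : Type*} [Field k] [Ring H] [Algebra k H]
    (Q : QuantumHeap k H) (ε : H →ₐ[k] k) :
    lTensor H (qhDelta Q ε) ∘ₗ qhDelta Q ε =
      (TensorProduct.assoc k H H H).toLinearMap ∘ₗ rTensor H (qhDelta Q ε) ∘ₗ
        qhDelta Q ε := by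
  simpa only [qhDelta] using qhDelta_coassoc_aux Q.τ ε Q.coassoc
end

section
/- Let (H, μ, η, τ) be a quantum heap over k with an algebra character ε : H → k, and set Δ := (id ⊗ ε ⊗ id) ∘ τ. Then ε is a counit for Δ: (id ⊗ ε) ∘ Δ = id and (ε ⊗ id) ∘ Δ = id. -/
open TensorProduct LinearMap

/-- The character `ε` is a counit for `Δ := (id ⊗ ε ⊗ id) ∘ τ`. -/
theorem qh_counit {k H : Type*} [Field k] [Ring H] [Algebra k H]
    (Q : QuantumHeap k H) (ε : H →ₐ[k] k) :
    (TensorProduct.rid k H).toLinearMap ∘ₗ lTensor H ε.toLinearMap ∘ₗ qhDelta Q ε =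
      LinearMap.id ∧
    (TensorProduct.lid k H).toLinearMap ∘ₗ rTensor H ε.toLinearMap ∘ₗ qhDelta Q ε =
      LinearMap.id := by
  constructor
  · ext h
    have key : ((TensorProduct.rid k H).toLinearMap ∘ₗ lTensor H ε.toLinearMap ∘ₗ
        lTensor H ((TensorProduct.lid k H).toLinearMap ∘ₗ rTensor H ε.toLinearMap))
        = ((TensorProduct.rid k H).toLinearMap ∘ₗ lTensor H ε.toLinearMap) ∘ₗ
          lTensor H (mul' k H) := by
      ext a b c
      simp [mul_comm, smul_smul]
    have h1 := congrArg ((TensorProduct.rid k H).toLinearMap ∘ₗ lTensor H ε.toLinearMap)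
      (Q.idMul h)
    simp only [qhDelta, coe_comp, Function.comp_apply, id_coe, id_eq]
    calc (TensorProduct.rid k H) ((lTensor H ε.toLinearMap)
          ((lTensor H ((TensorProduct.lid k H).toLinearMap ∘ₗ rTensor H ε.toLinearMap)) (Q.τ h)))
        = (((TensorProduct.rid k H).toLinearMap ∘ₗ lTensor H ε.toLinearMap ∘ₗ
            lTensor H ((TensorProduct.lid k H).toLinearMap ∘ₗ rTensor H ε.toLinearMap))) (Q.τ h) := rfl
      _ = (((TensorProduct.rid k H).toLinearMap ∘ₗ lTensor H ε.toLinearMap) ∘ₗ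
            lTensor H (mul' k H)) (Q.τ h) := by rw [key]
      _ = ((TensorProduct.rid k H).toLinearMap ∘ₗ lTensor H ε.toLinearMap) (h ⊗ₜ[k] (1 : H)) := by
            simp only [coe_comp, Function.comp_apply]; rw [Q.idMul h]
      _ = h := by simp
  · ext h
    have key : ((TensorProduct.lid k H).toLinearMap ∘ₗ rTensor H ε.toLinearMap ∘ₗ
        lTensor H ((TensorProduct.lid k H).toLinearMap ∘ₗ rTensor H ε.toLinearMap))
        = (((TensorProduct.lid k H).toLinearMap ∘ₗ rTensor H ε.toLinearMap) ∘ₗ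
          rTensor H (mul' k H)) ∘ₗ (TensorProduct.assoc k H H H).symm.toLinearMap := by
      ext a b c
      simp [smul_smul, mul_comm]
    have : ((TensorProduct.lid k H).toLinearMap ∘ₗ rTensor H ε.toLinearMap ∘ₗ
        lTensor H ((TensorProduct.lid k H).toLinearMap ∘ₗ rTensor H ε.toLinearMap)) (Q.τ h)
        = ((TensorProduct.lid k H).toLinearMap ∘ₗ rTensor H ε.toLinearMap)
            ((1 : H) ⊗ₜ[k] h) := by
      rw [key]
      simp only [coe_comp, Function.comp_apply, LinearEquiv.coe_coe]
      rw [Q.mulId h]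
    simp only [qhDelta, coe_comp, Function.comp_apply, id_coe, id_eq] at this ⊢
    rw [this]
    simp
end

section
/- Let (H, μ, η, τ, ε) be a copointed quantum heap over k. Define Δ := (id ⊗ ε ⊗ id) ∘ τ and S(h) := Σ ε(h⁽¹⁾) h⁽²⁾ ε(h⁽³⁾) where τ(h) = Σ h⁽¹⁾ ⊗ h⁽²⁾ ⊗ h⁽³⁾. Then S is an antipode: μ ∘ (id ⊗ S) ∘ Δ = η ∘ ε = μ ∘ (S ⊗ id) ∘ Δ, so (H, μ, η, Δ, ε, S) is a Hopf algebra. -/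
open TensorProduct LinearMap

/-- The antipode `S h = Σ ε(h⁽¹⁾) h⁽²⁾ ε(h⁽³⁾)` built from a copointed quantum heap. -/
noncomputable def qhAntipode {k H : Type*} [CommRing k] [Ring H] [Algebra k H]
    (Q : QuantumHeap k H) (ε : H →ₐ[k] k) : H →ₗ[k] H :=
  (TensorProduct.lid k H).toLinearMap ∘ₗ rTensor H ε.toLinearMap ∘ₗ
    lTensor H ((TensorProduct.rid k H).toLinearMap ∘ₗ lTensor H ε.toLinearMap) ∘ₗ Q.τ


section QHAux

variable {k H : Type*} [CommRing k] [Ring H] [Algebra k H]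

noncomputable def qhE1 (ε : H →ₐ[k] k) : H ⊗[k] H →ₗ[k] H :=
  (TensorProduct.rid k H).toLinearMap ∘ₗ lTensor H ε.toLinearMap

noncomputable def qhE2 (ε : H →ₐ[k] k) : H ⊗[k] H →ₗ[k] H :=
  (TensorProduct.lid k H).toLinearMap ∘ₗ rTensor H ε.toLinearMap

noncomputable def qhEL (ε : H →ₐ[k] k) (X : Type*) [AddCommGroup X] [Module k X] :
    H ⊗[k] X →ₗ[k] X :=
  (TensorProduct.lid k X).toLinearMap ∘ₗ rTensor X ε.toLinearMap

@[simp] lemma qhE1_tmul (ε : H →ₐ[k] k) (a b : H) : qhE1 ε (a ⊗ₜ[k] b) = ε b • a := by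
  simp [qhE1]

@[simp] lemma qhE2_tmul (ε : H →ₐ[k] k) (a b : H) : qhE2 ε (a ⊗ₜ[k] b) = ε a • b := by
  simp [qhE2]

@[simp] lemma qhEL_tmul (ε : H →ₐ[k] k) {X : Type*} [AddCommGroup X] [Module k X]
    (a : H) (x : X) : qhEL ε X (a ⊗ₜ[k] x) = ε a • x := by
  simp [qhEL]

noncomputable def qhP (ε : H →ₐ[k] k) : H ⊗[k] (H ⊗[k] H) →ₗ[k] H :=
  qhE2 ε ∘ₗ lTensor H (qhE1 ε)

@[simp] lemma qhP_tmul (ε : H →ₐ[k] k) (a b c : H) :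
    qhP ε (a ⊗ₜ[k] (b ⊗ₜ[k] c)) = (ε a * ε c) • b := by
  simp [qhP, mul_smul, smul_comm (ε a) (ε c)]

end QHAux

section QHAux2

variable {k H : Type*} [CommRing k] [Ring H] [Algebra k H]

lemma qhAntipode_eq (Q : QuantumHeap k H) (ε : H →ₐ[k] k) :
    qhAntipode Q ε = qhP ε ∘ₗ Q.τ := rfl

lemma qhDelta_eq (Q : QuantumHeap k H) (ε : H →ₐ[k] k) :
    qhDelta Q ε = lTensor H (qhE2 ε) ∘ₗ Q.τ := rfl

lemma qhW_comp (ε : H →ₐ[k] k) :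
    qhE1 ε ∘ₗ lTensor H (qhE1 ε) = qhE1 ε ∘ₗ lTensor H (mul' k H) := by
  apply TensorProduct.ext'
  intro a y
  induction y using TensorProduct.induction_on with
  | zero => simp only [zero_tmul, tmul_zero, LinearMap.map_zero]
  | tmul b c =>
    simp only [comp_apply, lTensor_tmul, qhE1_tmul, map_smul, map_mul, mul'_apply, smul_smul,
      smul_eq_mul]
    all_goals (congr 1; ring)
  | add u v hu hv => simp only [tmul_add, LinearMap.map_add, hu, hv]

lemma qhV_comp (ε : H →ₐ[k] k) :
    qhE2 ε ∘ₗ lTensor H (qhE2 ε) =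
      (qhE2 ε ∘ₗ rTensor H (mul' k H)) ∘ₗ (TensorProduct.assoc k H H H).symm.toLinearMap := by
  apply TensorProduct.ext'
  intro a y
  induction y using TensorProduct.induction_on with
  | zero => simp only [zero_tmul, tmul_zero, LinearMap.map_zero]
  | tmul b c =>
    simp only [comp_apply, lTensor_tmul, rTensor_tmul, qhE2_tmul, map_smul, map_mul,
      LinearEquiv.coe_coe, assoc_symm_tmul, mul'_apply, smul_smul, smul_eq_mul]
  | add u v hu hv => simp only [tmul_add, LinearMap.map_add, hu, hv]

lemma qhW_tau (Q : QuantumHeap k H) (ε : H →ₐ[k] k) (g : H) :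
    qhE1 ε (lTensor H (qhE1 ε) (Q.τ g)) = g := by
  have h1 := LinearMap.congr_fun (qhW_comp (k := k) (H := H) ε) (Q.τ g)
  simp only [comp_apply] at h1
  rw [h1, Q.idMul]
  simp

lemma qhV_tau (Q : QuantumHeap k H) (ε : H →ₐ[k] k) (g : H) :
    qhE2 ε (lTensor H (qhE2 ε) (Q.τ g)) = g := by
  have h1 := LinearMap.congr_fun (qhV_comp (k := k) (H := H) ε) (Q.τ g)
  simp only [comp_apply, LinearEquiv.coe_coe] at h1
  rw [h1, Q.mulId]
  simp

lemma qhW_tau_id (Q : QuantumHeap k H) (ε : H →ₐ[k] k) :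
    (qhE1 ε ∘ₗ lTensor H (qhE1 ε)) ∘ₗ Q.τ = LinearMap.id := by
  ext g; simpa using qhW_tau Q ε g

lemma qhV_tau_id (Q : QuantumHeap k H) (ε : H →ₐ[k] k) :
    (qhE2 ε ∘ₗ lTensor H (qhE2 ε)) ∘ₗ Q.τ = LinearMap.id := by
  ext g; simpa using qhV_tau Q ε g

lemma qhC1 (Q : QuantumHeap k H) (ε : H →ₐ[k] k) :
    (qhP ε ∘ₗ Q.τ) ∘ₗ qhE2 ε = ((qhE2 ε ∘ₗ lTensor H (qhP ε)) ∘ₗ lTensor H Q.τ) := by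
  apply TensorProduct.ext'
  intro a b
  simp [comp_apply, map_smul]

lemma qhL2 (ε : H →ₐ[k] k) :
    mul' k H ∘ₗ lTensor H (qhE2 ε ∘ₗ lTensor H (qhP ε)) ∘ₗ
        lTensor H (TensorProduct.assoc k H H (H ⊗[k] H)).toLinearMap ∘ₗ
        (TensorProduct.assoc k H (H ⊗[k] H) (H ⊗[k] H)).toLinearMap =
      mul' k H ∘ₗ rTensor H (qhE1 ε ∘ₗ lTensor H (qhE1 ε)) ∘ₗ
        lTensor (H ⊗[k] (H ⊗[k] H)) (qhE1 ε) := by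
  apply TensorProduct.ext'
  intro z y
  induction z using TensorProduct.induction_on with
  | zero => simp only [zero_tmul, tmul_zero, LinearMap.map_zero]
  | add u v hu hv => simp only [add_tmul, LinearMap.map_add, hu, hv]
  | tmul a bc =>
    induction bc using TensorProduct.induction_on with
    | zero => simp only [zero_tmul, tmul_zero, LinearMap.map_zero]
    | add u v hu hv => simp only [tmul_add, add_tmul, LinearMap.map_add, hu, hv]
    | tmul b c =>
      induction y using TensorProduct.induction_on with
      | zero => simp only [zero_tmul, tmul_zero, LinearMap.map_zero]
      | add u v hu hv => simp only [tmul_add, LinearMap.map_add, hu, hv]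
      | tmul v w =>
        simp only [comp_apply, LinearEquiv.coe_coe, assoc_tmul, lTensor_tmul, rTensor_tmul,
          qhE1_tmul, qhE2_tmul, qhP_tmul, qhEL_tmul, map_smul, smul_smul, mul'_apply,
          smul_mul_assoc, mul_smul_comm, smul_eq_mul]
        all_goals (congr 1; ring)

lemma qhL5 (ε : H →ₐ[k] k) :
    mul' k H ∘ₗ rTensor H (qhP ε) ∘ₗ lTensor (H ⊗[k] (H ⊗[k] H)) (qhE2 ε) =
      mul' k H ∘ₗ qhEL ε (H ⊗[k] H) ∘ₗ
        lTensor H (lTensor H (qhE2 ε ∘ₗ lTensor H (qhE2 ε))) ∘ₗ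
        lTensor H (TensorProduct.assoc k H H (H ⊗[k] H)).toLinearMap ∘ₗ
        (TensorProduct.assoc k H (H ⊗[k] H) (H ⊗[k] H)).toLinearMap := by
  apply TensorProduct.ext'
  intro z y
  induction z using TensorProduct.induction_on with
  | zero => simp only [zero_tmul, tmul_zero, LinearMap.map_zero]
  | add u v hu hv => simp only [add_tmul, LinearMap.map_add, hu, hv]
  | tmul a bc =>
    induction bc using TensorProduct.induction_on with
    | zero => simp only [zero_tmul, tmul_zero, LinearMap.map_zero]
    | add u v hu hv => simp only [tmul_add, add_tmul, LinearMap.map_add, hu, hv]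
    | tmul b c =>
      induction y using TensorProduct.induction_on with
      | zero => simp only [zero_tmul, tmul_zero, LinearMap.map_zero]
      | add u v hu hv => simp only [tmul_add, LinearMap.map_add, hu, hv]
      | tmul v w =>
        simp only [comp_apply, LinearEquiv.coe_coe, assoc_tmul, lTensor_tmul, rTensor_tmul,
          qhE1_tmul, qhE2_tmul, qhP_tmul, qhEL_tmul, map_smul, smul_smul, mul'_apply,
          smul_mul_assoc, mul_smul_comm, smul_eq_mul]
        all_goals (congr 1; ring)

lemma qhL3 (ε : H →ₐ[k] k) :
    mul' k H ∘ₗ lTensor H (qhE1 ε) =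
      (qhE1 ε ∘ₗ rTensor H (mul' k H)) ∘ₗ (TensorProduct.assoc k H H H).symm.toLinearMap := by
  apply TensorProduct.ext'
  intro a y
  induction y using TensorProduct.induction_on with
  | zero => simp only [zero_tmul, tmul_zero, LinearMap.map_zero]
  | tmul b c => simp [assoc_symm_tmul, mul'_apply]
  | add u v hu hv => simp only [tmul_add, LinearMap.map_add, hu, hv]

lemma qhL4 (ε : H →ₐ[k] k) :
    mul' k H ∘ₗ qhEL ε (H ⊗[k] H) = qhE2 ε ∘ₗ lTensor H (mul' k H) := by
  apply TensorProduct.ext'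
  intro a y
  induction y using TensorProduct.induction_on with
  | zero => simp only [zero_tmul, tmul_zero, LinearMap.map_zero]
  | tmul b c => simp [mul'_apply]
  | add u v hu hv => simp only [tmul_add, LinearMap.map_add, hu, hv]

end QHAux2

/-- `S` is an antipode for `(H, Δ, ε)`:
`μ ∘ (id ⊗ S) ∘ Δ = η ∘ ε = μ ∘ (S ⊗ id) ∘ Δ`, so a copointed quantum heap
yields a Hopf algebra. -/
theorem qhAntipode_is_antipode {k H : Type*} [Field k] [Ring H] [Algebra k H]
    (Q : QuantumHeap k H) (ε : H →ₐ[k] k) :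
    ∀ h : H,
      mul' k H (lTensor H (qhAntipode Q ε) (qhDelta Q ε h)) = algebraMap k H (ε h) ∧
      mul' k H (rTensor H (qhAntipode Q ε) (qhDelta Q ε h)) = algebraMap k H (ε h) := by
  intro h
  have hc := LinearMap.congr_fun Q.coassoc h
  simp only [comp_apply] at hc
  constructor
  · have s1 : lTensor H (qhAntipode Q ε) (qhDelta Q ε h)
        = lTensor H ((qhE2 ε ∘ₗ lTensor H (qhP ε)) ∘ₗ lTensor H Q.τ) (Q.τ h) := by
      rw [qhAntipode_eq, qhDelta_eq, ← qhC1 Q ε]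
      simp only [lTensor_comp, comp_apply]
    rw [s1, lTensor_comp, comp_apply, hc]
    have s2 := LinearMap.congr_fun (qhL2 (k := k) (H := H) ε)
      (rTensor (H ⊗[k] H) Q.τ (Q.τ h))
    simp only [comp_apply] at s2
    rw [s2]
    have s3c : lTensor (H ⊗[k] (H ⊗[k] H)) (qhE1 ε) ∘ₗ rTensor (H ⊗[k] H) Q.τ
        = rTensor H Q.τ ∘ₗ lTensor H (qhE1 ε) := by
      rw [lTensor_comp_rTensor, rTensor_comp_lTensor]
    have s3 := LinearMap.congr_fun s3c (Q.τ h)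
    simp only [comp_apply] at s3
    have s5c : rTensor H (qhE1 ε ∘ₗ lTensor H (qhE1 ε)) ∘ₗ rTensor H Q.τ
        = LinearMap.id := by
      rw [← rTensor_comp, qhW_tau_id Q ε, rTensor_id]
    have s5 := LinearMap.congr_fun s5c (lTensor H (qhE1 ε) (Q.τ h))
    simp only [comp_apply, LinearMap.id_apply] at s5
    rw [s3, s5]
    have s4 := LinearMap.congr_fun (qhL3 (k := k) (H := H) ε) (Q.τ h)
    simp only [comp_apply, LinearEquiv.coe_coe] at s4
    rw [s4, Q.mulId]
    simp [Algebra.algebraMap_eq_smul_one]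
  · have t0 : rTensor H (qhP ε ∘ₗ Q.τ) ∘ₗ lTensor H (qhE2 ε)
        = rTensor H (qhP ε) ∘ₗ lTensor (H ⊗[k] (H ⊗[k] H)) (qhE2 ε) ∘ₗ
          rTensor (H ⊗[k] H) Q.τ := by
      apply TensorProduct.ext'
      intro a y
      simp only [comp_apply, rTensor_tmul, lTensor_tmul]
    have t1 : rTensor H (qhAntipode Q ε) (qhDelta Q ε h)
        = rTensor H (qhP ε) (lTensor (H ⊗[k] (H ⊗[k] H)) (qhE2 ε)
            (rTensor (H ⊗[k] H) Q.τ (Q.τ h))) := by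
      rw [qhAntipode_eq, qhDelta_eq]
      have := LinearMap.congr_fun t0 (Q.τ h)
      simp only [comp_apply] at this ⊢
      exact this
    rw [t1]
    have t2 := LinearMap.congr_fun (qhL5 (k := k) (H := H) ε)
      (rTensor (H ⊗[k] H) Q.τ (Q.τ h))
    simp only [comp_apply] at t2
    rw [t2, ← hc]
    have t3 : lTensor H (lTensor H (qhE2 ε ∘ₗ lTensor H (qhE2 ε)))
          (lTensor H (lTensor H Q.τ) (Q.τ h)) = Q.τ h := by
      rw [← comp_apply, ← lTensor_comp, ← lTensor_comp, qhV_tau_id Q ε, lTensor_id,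
        lTensor_id, LinearMap.id_apply]
    rw [t3]
    have t4 := LinearMap.congr_fun (qhL4 (k := k) (H := H) ε) (Q.τ h)
    simp only [comp_apply] at t4
    rw [t4, Q.idMul]
    simp [Algebra.algebraMap_eq_smul_one]
end

section
/- Let C be a coheap monoid in the symmetric monoidal category of k-vector spaces (i.e. a quantum heap) and let ε : C → k be a character (unital algebra homomorphism). Then ε is automatically a counit of the underlying cop: (id ⊗ ε ⊗ ε) ∘ τ = id = (ε ⊗ ε ⊗ id) ∘ τ. -/
open TensorProduct LinearMap

/-- A character of a coheap monoid (quantum heap) is automatically a counit of the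
underlying cop: `(id ⊗ ε ⊗ ε) ∘ τ = id = (ε ⊗ ε ⊗ id) ∘ τ`. -/
theorem qh_character_is_cop_counit {k H : Type*} [Field k] [Ring H] [Algebra k H]
    (Q : QuantumHeap k H) (ε : H →ₐ[k] k) :
    (TensorProduct.rid k H).toLinearMap ∘ₗ
        lTensor H (mul' k k ∘ₗ TensorProduct.map ε.toLinearMap ε.toLinearMap) ∘ₗ Q.τ =
      LinearMap.id ∧
    (TensorProduct.lid k H).toLinearMap ∘ₗ
        TensorProduct.map ε.toLinearMap
          ((TensorProduct.lid k H).toLinearMap ∘ₗ rTensor H ε.toLinearMap) ∘ₗ Q.τ =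
      LinearMap.id := by
  have hmul : mul' k k ∘ₗ TensorProduct.map ε.toLinearMap ε.toLinearMap
      = ε.toLinearMap ∘ₗ mul' k H := by
    apply TensorProduct.ext'
    intro x y
    simp [mul'_apply]
  constructor
  · ext h
    simp only [coe_comp, Function.comp_apply, id_coe, id_eq, hmul, lTensor_comp,
      lTensor_tmul]
    rw [Q.idMul h]
    simp
  · ext h
    have key : (TensorProduct.lid k H).toLinearMap ∘ₗ
        TensorProduct.map ε.toLinearMap
          ((TensorProduct.lid k H).toLinearMap ∘ₗ rTensor H ε.toLinearMap)
      = ((TensorProduct.lid k H).toLinearMap ∘ₗ rTensor H ε.toLinearMap ∘ₗ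
          rTensor H (mul' k H)) ∘ₗ (TensorProduct.assoc k H H H).symm.toLinearMap := by
      apply TensorProduct.ext'
      intro a bc
      induction bc using TensorProduct.induction_on with
      | zero => simp only [TensorProduct.tmul_zero, map_zero]
      | tmul b c =>
        simp [mul'_apply, smul_smul, mul_comm]
      | add x y hx hy =>
        simp only [TensorProduct.tmul_add, map_add, hx, hy]
    have key' := LinearMap.congr_fun key (Q.τ h)
    simp only [coe_comp, Function.comp_apply, LinearEquiv.coe_coe] at key' ⊢
    rw [key', Q.mulId h]
    simp
end
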